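/- arXiv:1704.02954 — 3 statements merged into one kernel-verified Lean document; each statement's English description precedes it below -/
import Mathlib

section
/- Let V₁, V₂, V₃ and W₁, W₂, W₃ be Banach spaces, V = V₁⊕V₂⊕V₃, W = W₁⊕W₂⊕W₃, and let L : V → W be a bounded operator given in block form by L = [[D₁, B₊, 0], [B₋, D₂, A₊], [0, A₋, D₃]]. Suppose D₁ : V₁ → W₁, A₋ : V₂ → W₃ and Z := A₊ − (D₂ − B₋D₁⁻¹B₊)A₋⁻¹D₃ : V₃ → W₂ are invertible (with bounded inverses). Then L has a bounded left inverse R : W → V, i.e. RL = id_V; moreover ‖R‖ is bounded by a function of ‖L‖, ‖D₁⁻¹‖, ‖A₋⁻¹‖, and ‖Z⁻¹‖. -/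
open ContinuousLinearMap

/-- Block Gaussian elimination: a 3×3 block operator L between Banach spaces with
    invertible blocks D₁, Am and invertible Schur-type complement
    Z = Ap − (D₂ − BmD₁⁻¹Bp)Am⁻¹D₃ has a bounded left inverse R with RL = id, with
    ‖R‖ bounded by a function of ‖L‖, ‖D₁⁻¹‖, ‖Am⁻¹‖ and ‖Z⁻¹‖. -/
theorem block_left_inverse :
    ∃ f : ℝ → ℝ → ℝ → ℝ → ℝ,
      ∀ (V₁ V₂ V₃ W₁ W₂ W₃ : Type)
        [NormedAddCommGroup V₁] [NormedSpace ℝ V₁] [CompleteSpace V₁]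
        [NormedAddCommGroup V₂] [NormedSpace ℝ V₂] [CompleteSpace V₂]
        [NormedAddCommGroup V₃] [NormedSpace ℝ V₃] [CompleteSpace V₃]
        [NormedAddCommGroup W₁] [NormedSpace ℝ W₁] [CompleteSpace W₁]
        [NormedAddCommGroup W₂] [NormedSpace ℝ W₂] [CompleteSpace W₂]
        [NormedAddCommGroup W₃] [NormedSpace ℝ W₃] [CompleteSpace W₃]
        (D₁ : V₁ →L[ℝ] W₁) (Bp : V₂ →L[ℝ] W₁)
        (Bm : V₁ →L[ℝ] W₂) (D₂ : V₂ →L[ℝ] W₂) (Ap : V₃ →L[ℝ] W₂)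
        (Am : V₂ →L[ℝ] W₃) (D₃ : V₃ →L[ℝ] W₃)
        (L : (V₁ × V₂ × V₃) →L[ℝ] (W₁ × W₂ × W₃))
        (_hL : ∀ (v₁ : V₁) (v₂ : V₂) (v₃ : V₃), L (v₁, v₂, v₃) =
          (D₁ v₁ + Bp v₂, Bm v₁ + D₂ v₂ + Ap v₃, Am v₂ + D₃ v₃))
        (D₁inv : W₁ →L[ℝ] V₁)
        (_hD₁l : D₁inv.comp D₁ = ContinuousLinearMap.id ℝ V₁)
        (_hD₁r : D₁.comp D₁inv = ContinuousLinearMap.id ℝ W₁)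
        (Aminv : W₃ →L[ℝ] V₂)
        (_hAml : Aminv.comp Am = ContinuousLinearMap.id ℝ V₂)
        (_hAmr : Am.comp Aminv = ContinuousLinearMap.id ℝ W₃)
        (Zinv : W₂ →L[ℝ] V₃)
        (_hZl : Zinv.comp
            (Ap - (D₂ - Bm.comp (D₁inv.comp Bp)).comp (Aminv.comp D₃)) =
          ContinuousLinearMap.id ℝ V₃)
        (_hZr : (Ap - (D₂ - Bm.comp (D₁inv.comp Bp)).comp (Aminv.comp D₃)).comp
            Zinv = ContinuousLinearMap.id ℝ W₂),
        ∃ R : (W₁ × W₂ × W₃) →L[ℝ] (V₁ × V₂ × V₃),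
          R.comp L = ContinuousLinearMap.id ℝ (V₁ × V₂ × V₃) ∧
          ‖R‖ ≤ f ‖L‖ ‖D₁inv‖ ‖Aminv‖ ‖Zinv‖ := by
  refine ⟨fun a b c d =>
    (b + b*a*(c + c*a*(d*(1 + a*b + (a+a*b*a)*c)))) +
    ((c + c*a*(d*(1 + a*b + (a+a*b*a)*c))) + d*(1 + a*b + (a+a*b*a)*c)), ?_⟩
  intro V₁ V₂ V₃ W₁ W₂ W₃ _ _ _ _ _ _ _ _ _ _ _ _ _ _ _ _ _ _
    D₁ Bp Bm D₂ Ap Am D₃ L hL D₁inv hD₁l _hD₁r Aminv hAml _hAmr Zinv hZl _hZr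
  set p₁ : (W₁ × W₂ × W₃) →L[ℝ] W₁ := fst ℝ W₁ (W₂ × W₃) with hp₁def
  set p₂ : (W₁ × W₂ × W₃) →L[ℝ] W₂ :=
    (fst ℝ W₂ W₃).comp (snd ℝ W₁ (W₂ × W₃)) with hp₂def
  set p₃ : (W₁ × W₂ × W₃) →L[ℝ] W₃ :=
    (snd ℝ W₂ W₃).comp (snd ℝ W₁ (W₂ × W₃)) with hp₃def
  set E : W₃ →L[ℝ] W₂ := (D₂ - Bm.comp (D₁inv.comp Bp)).comp Aminv with hEdef
  set T₃ : (W₁ × W₂ × W₃) →L[ℝ] V₃ :=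
    Zinv.comp (p₂ - (Bm.comp D₁inv).comp p₁ - E.comp p₃) with hT₃def
  set T₂ : (W₁ × W₂ × W₃) →L[ℝ] V₂ :=
    Aminv.comp p₃ - (Aminv.comp D₃).comp T₃ with hT₂def
  set T₁ : (W₁ × W₂ × W₃) →L[ℝ] V₁ :=
    D₁inv.comp p₁ - (D₁inv.comp Bp).comp T₂ with hT₁def
  refine ⟨T₁.prod (T₂.prod T₃), ?_, ?_⟩
  · -- left inverse
    have hD₁ : ∀ x, D₁inv (D₁ x) = x := fun x => congrArg (· x) hD₁l
    have hAm : ∀ x, Aminv (Am x) = x := fun x => congrArg (· x) hAml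
    have hZ : ∀ x, Zinv ((Ap - (D₂ - Bm.comp (D₁inv.comp Bp)).comp
        (Aminv.comp D₃)) x) = x := fun x => congrArg (· x) hZl
    apply ContinuousLinearMap.ext
    rintro ⟨v₁, v₂, v₃⟩
    have e1 : D₁inv (D₁ v₁ + Bp v₂) = v₁ + D₁inv (Bp v₂) := by
      rw [map_add, hD₁]
    have e2 : Aminv (Am v₂ + D₃ v₃) = v₂ + Aminv (D₃ v₃) := by
      rw [map_add, hAm]
    have h3 : T₃ (L (v₁, v₂, v₃)) = v₃ := by
      rw [hT₃def]
      have key : (p₂ - (Bm.comp D₁inv).comp p₁ - E.comp p₃) (L (v₁, v₂, v₃)) =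
          (Ap - (D₂ - Bm.comp (D₁inv.comp Bp)).comp (Aminv.comp D₃)) v₃ := by
        rw [hL]
        simp only [sub_apply, comp_apply, hp₁def, hp₂def, hp₃def, hEdef,
          ContinuousLinearMap.coe_fst', ContinuousLinearMap.coe_snd', e1, e2]
        simp only [map_add, map_sub, sub_apply, comp_apply]
        abel
      rw [comp_apply, key, hZ]
    have h2 : T₂ (L (v₁, v₂, v₃)) = v₂ := by
      rw [hT₂def]
      have hp : p₃ (L (v₁, v₂, v₃)) = Am v₂ + D₃ v₃ := by
        rw [hL, hp₃def]; rfl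
      simp only [sub_apply, comp_apply]
      rw [h3, hp, e2]
      abel
    have h1 : T₁ (L (v₁, v₂, v₃)) = v₁ := by
      rw [hT₁def]
      have hp : p₁ (L (v₁, v₂, v₃)) = D₁ v₁ + Bp v₂ := by
        rw [hL, hp₁def]; rfl
      simp only [sub_apply, comp_apply]
      rw [h2, hp, e1]
      abel
    show (T₁.prod (T₂.prod T₃)) (L (v₁, v₂, v₃)) = (v₁, v₂, v₃)
    rw [prod_apply, prod_apply, h1, h2, h3]
  · -- norm bound
    set a := ‖L‖ with hadef; set b := ‖D₁inv‖ with hbdef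
    set c := ‖Aminv‖ with hcdef; set d := ‖Zinv‖ with hddef
    have ha : 0 ≤ a := norm_nonneg _
    have hb : 0 ≤ b := norm_nonneg _
    have hc : 0 ≤ c := norm_nonneg _
    have hd : 0 ≤ d := norm_nonneg _
    have hnorm3 : ∀ (v₁ : V₁) (v₂ : V₂) (v₃ : V₃),
        ‖(v₁, v₂, v₃)‖ = max ‖v₁‖ (max ‖v₂‖ ‖v₃‖) := fun _ _ _ => rfl
    have hBp : ‖Bp‖ ≤ a := by
      refine opNorm_le_bound _ ha fun v => ?_
      have h : Bp v = (L (0, v, 0)).1 := by simp [hL]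
      calc ‖Bp v‖ = ‖(L (0, v, 0)).1‖ := by rw [h]
        _ ≤ ‖L (0, v, 0)‖ := norm_fst_le _
        _ ≤ a * ‖(0, v, 0)‖ := L.le_opNorm _
        _ = a * ‖v‖ := by rw [hnorm3]; simp
    have hBm : ‖Bm‖ ≤ a := by
      refine opNorm_le_bound _ ha fun v => ?_
      have h : Bm v = (L (v, 0, 0)).2.1 := by simp [hL]
      calc ‖Bm v‖ = ‖(L (v, 0, 0)).2.1‖ := by rw [h]
        _ ≤ ‖(L (v, 0, 0)).2‖ := norm_fst_le _
        _ ≤ ‖L (v, 0, 0)‖ := norm_snd_le _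
        _ ≤ a * ‖(v, 0, 0)‖ := L.le_opNorm _
        _ = a * ‖v‖ := by rw [hnorm3]; simp
    have hD₂ : ‖D₂‖ ≤ a := by
      refine opNorm_le_bound _ ha fun v => ?_
      have h : D₂ v = (L (0, v, 0)).2.1 := by simp [hL]
      calc ‖D₂ v‖ = ‖(L (0, v, 0)).2.1‖ := by rw [h]
        _ ≤ ‖(L (0, v, 0)).2‖ := norm_fst_le _
        _ ≤ ‖L (0, v, 0)‖ := norm_snd_le _
        _ ≤ a * ‖(0, v, 0)‖ := L.le_opNorm _
        _ = a * ‖v‖ := by rw [hnorm3]; simp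
    have hD₃ : ‖D₃‖ ≤ a := by
      refine opNorm_le_bound _ ha fun v => ?_
      have h : D₃ v = (L (0, 0, v)).2.2 := by simp [hL]
      calc ‖D₃ v‖ = ‖(L (0, 0, v)).2.2‖ := by rw [h]
        _ ≤ ‖(L (0, 0, v)).2‖ := norm_snd_le _
        _ ≤ ‖L (0, 0, v)‖ := norm_snd_le _
        _ ≤ a * ‖(0, 0, v)‖ := L.le_opNorm _
        _ = a * ‖v‖ := by rw [hnorm3]; simp
    have hp1 : ‖p₁‖ ≤ 1 := ContinuousLinearMap.norm_fst_le ..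
    have hp2 : ‖p₂‖ ≤ 1 := by
      refine (opNorm_comp_le _ _).trans ?_
      calc ‖fst ℝ W₂ W₃‖ * ‖snd ℝ W₁ (W₂ × W₃)‖ ≤ 1 * 1 :=
            mul_le_mul (ContinuousLinearMap.norm_fst_le ..)
              (ContinuousLinearMap.norm_snd_le ..) (norm_nonneg _) zero_le_one
        _ = 1 := one_mul 1
    have hp3 : ‖p₃‖ ≤ 1 := by
      refine (opNorm_comp_le _ _).trans ?_
      calc ‖snd ℝ W₂ W₃‖ * ‖snd ℝ W₁ (W₂ × W₃)‖ ≤ 1 * 1 :=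
            mul_le_mul (ContinuousLinearMap.norm_snd_le ..)
              (ContinuousLinearMap.norm_snd_le ..) (norm_nonneg _) zero_le_one
        _ = 1 := one_mul 1
    have hcmp : ∀ {X Y Z : Type} [NormedAddCommGroup X] [NormedSpace ℝ X]
        [NormedAddCommGroup Y] [NormedSpace ℝ Y]
        [NormedAddCommGroup Z] [NormedSpace ℝ Z]
        (g : Y →L[ℝ] Z) (f : X →L[ℝ] Y) (u v : ℝ),
        ‖g‖ ≤ u → ‖f‖ ≤ v → ‖g.comp f‖ ≤ u * v := by
      intro X Y Z _ _ _ _ _ _ g f u v hg hf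
      exact (opNorm_comp_le _ _).trans
        (mul_le_mul hg hf (norm_nonneg _) ((norm_nonneg g).trans hg))
    have hmid : ‖D₂ - Bm.comp (D₁inv.comp Bp)‖ ≤ a + a*b*a := by
      refine (norm_sub_le _ _).trans ?_
      have h1 : ‖Bm.comp (D₁inv.comp Bp)‖ ≤ a * (b * a) :=
        hcmp _ _ _ _ hBm (hcmp _ _ _ _ (le_refl b) hBp)
      have h2 : a * (b * a) = a*b*a := by ring
      linarith
    have hE : ‖E‖ ≤ (a + a*b*a) * c := hcmp _ _ _ _ hmid (le_refl c)
    have hT₃ : ‖T₃‖ ≤ d * (1 + a*b + (a+a*b*a)*c) := by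
      refine hcmp _ _ _ _ (le_refl d) ?_
      calc ‖p₂ - (Bm.comp D₁inv).comp p₁ - E.comp p₃‖
          ≤ ‖p₂ - (Bm.comp D₁inv).comp p₁‖ + ‖E.comp p₃‖ := norm_sub_le _ _
        _ ≤ (‖p₂‖ + ‖(Bm.comp D₁inv).comp p₁‖) + ‖E.comp p₃‖ := by
            linarith [norm_sub_le p₂ ((Bm.comp D₁inv).comp p₁)]
        _ ≤ (1 + (a*b) * 1) + ((a+a*b*a)*c) * 1 := by
            have h1 : ‖(Bm.comp D₁inv).comp p₁‖ ≤ (a*b) * 1 :=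
              hcmp _ _ _ _ (hcmp _ _ _ _ hBm (le_refl b)) hp1
            have h2 : ‖E.comp p₃‖ ≤ ((a+a*b*a)*c) * 1 := hcmp _ _ _ _ hE hp3
            linarith [hp2]
        _ = 1 + a*b + (a+a*b*a)*c := by ring
    have hT₂ : ‖T₂‖ ≤ c + c*a*(d*(1 + a*b + (a+a*b*a)*c)) := by
      rw [hT₂def]
      refine (norm_sub_le _ _).trans ?_
      have h1 : ‖Aminv.comp p₃‖ ≤ c * 1 := hcmp _ _ _ _ (le_refl c) hp3
      have h2 : ‖(Aminv.comp D₃).comp T₃‖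
          ≤ (c*a) * (d*(1 + a*b + (a+a*b*a)*c)) :=
        hcmp _ _ _ _ (hcmp _ _ _ _ (le_refl c) hD₃) hT₃
      linarith
    have hT₁ : ‖T₁‖ ≤ b + b*a*(c + c*a*(d*(1 + a*b + (a+a*b*a)*c))) := by
      rw [hT₁def]
      refine (norm_sub_le _ _).trans ?_
      have h1 : ‖D₁inv.comp p₁‖ ≤ b * 1 := hcmp _ _ _ _ (le_refl b) hp1
      have h2 : ‖(D₁inv.comp Bp).comp T₂‖
          ≤ (b*a) * (c + c*a*(d*(1 + a*b + (a+a*b*a)*c))) :=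
        hcmp _ _ _ _ (hcmp _ _ _ _ (le_refl b) hBp) hT₂
      linarith
    have hinner : (0:ℝ) ≤ 1 + a*b + (a+a*b*a)*c :=
      add_nonneg (add_nonneg zero_le_one (mul_nonneg ha hb))
        (mul_nonneg (add_nonneg ha (mul_nonneg (mul_nonneg ha hb) ha)) hc)
    have hS₃ : (0:ℝ) ≤ d*(1 + a*b + (a+a*b*a)*c) := mul_nonneg hd hinner
    have hS₂ : (0:ℝ) ≤ c + c*a*(d*(1 + a*b + (a+a*b*a)*c)) :=
      add_nonneg hc (mul_nonneg (mul_nonneg hc ha) hS₃)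
    have hS₁ : (0:ℝ) ≤ b + b*a*(c + c*a*(d*(1 + a*b + (a+a*b*a)*c))) :=
      add_nonneg hb (mul_nonneg (mul_nonneg hb ha) hS₂)
    rw [opNorm_prod, Prod.norm_def, opNorm_prod, Prod.norm_def]
    exact max_le (hT₁.trans (le_add_of_nonneg_right (add_nonneg hS₂ hS₃)))
      (max_le (hT₂.trans ((le_add_of_nonneg_right hS₃).trans
          (le_add_of_nonneg_left hS₁)))
        (hT₃.trans ((le_add_of_nonneg_left hS₂).trans
          (le_add_of_nonneg_left hS₁))))
end

section
/- Let X, Y be Banach spaces, I ⊆ X a finite-dimensional subspace with bounded projection π : X → I, O ⊆ Y a finite-dimensional subspace with bounded projection Π : Y → O and inclusion ι : O → Y, and let L : X → Y be bounded linear. If the operator L̄ : O ⊕ X → I ⊕ Y defined by L̄(o, x) = (πx, ιo + Lx) is invertible, then the restriction (id_Y − Π)∘L : ker π → ker Π is a bijective bounded operator. -/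
/-- If the stabilized operator L̄ : O ⊕ X → I ⊕ Y, L̄(o,x) = (πx, ιo + Lx), is
    invertible, then (id − Π)∘L restricts to a bijection ker π → ker Π. -/
theorem stabilized_invertible_implies_bijOn
    (X Y : Type*)
    [NormedAddCommGroup X] [NormedSpace ℝ X] [CompleteSpace X]
    [NormedAddCommGroup Y] [NormedSpace ℝ Y] [CompleteSpace Y]
    (L : X →L[ℝ] Y)
    (I : Submodule ℝ X) [FiniteDimensional ℝ I]
    (π : X →L[ℝ] X) (hπI : ∀ x : X, π x ∈ I) (hπid : ∀ x ∈ I, π x = x)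
    (O : Submodule ℝ Y) [FiniteDimensional ℝ O]
    (Pr : Y →L[ℝ] Y) (hPrO : ∀ y : Y, Pr y ∈ O) (hPrid : ∀ y ∈ O, Pr y = y)
    -- invertibility of the stabilized operator L̄(o, x) = (πx, ιo + Lx)
    (hinv : ∃ R : ↥I × Y → ↥O × X, Continuous R ∧
      (∀ p : ↥O × X, R ((⟨π p.2, hπI p.2⟩ : ↥I), (p.1 : Y) + L p.2) = p) ∧
      (∀ q : ↥I × Y,
        ((⟨π (R q).2, hπI (R q).2⟩ : ↥I), ((R q).1 : Y) + L (R q).2) = q)) :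
    Set.BijOn (fun x : X => L x - Pr (L x)) {x : X | π x = 0} {y : Y | Pr y = 0} := by
  obtain ⟨R, -, hleft, hright⟩ := hinv
  refine ⟨?_, ?_, ?_⟩
  · intro x _
    simp only [Set.mem_setOf_eq, map_sub]
    rw [hPrid (Pr (L x)) (hPrO _), sub_self]
  · intro x₁ hx₁ x₂ hx₂ heq
    simp only [Set.mem_setOf_eq] at hx₁ hx₂ heq
    set x := x₁ - x₂ with hxdef
    have hπx : π x = 0 := by simp [hxdef, map_sub, hx₁, hx₂]
    have hLx : L x - Pr (L x) = 0 :=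
      calc L x - Pr (L x) = (L x₁ - Pr (L x₁)) - (L x₂ - Pr (L x₂)) := by
            simp only [hxdef, map_sub]; abel
        _ = 0 := by rw [heq, sub_self]
    have hmem : L x ∈ O := by
      have : L x = Pr (L x) := by rwa [sub_eq_zero] at hLx
      rw [this]; exact hPrO _
    have key := hleft ((-⟨L x, hmem⟩ : ↥O), x)
    have key0 := hleft ((0 : ↥O), 0)
    have e1 : ((⟨π x, hπI x⟩ : ↥I), ((-⟨L x, hmem⟩ : ↥O) : Y) + L x)
        = ((⟨π (0:X), hπI 0⟩ : ↥I), ((0 : ↥O) : Y) + L (0:X)) := by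
      ext
      · simp [hπx]
      · simp
    have : ((-⟨L x, hmem⟩ : ↥O), x) = ((0 : ↥O), (0 : X)) := by
      rw [← key, ← key0, e1]
    have hx0 : x = 0 := congrArg Prod.snd this
    exact sub_eq_zero.mp hx0
  · intro y hy
    simp only [Set.mem_setOf_eq] at hy
    set p := R ((0 : ↥I), y) with hp
    have h := hright ((0 : ↥I), y)
    rw [← hp] at h
    have h1 : π p.2 = 0 := congrArg Subtype.val (congrArg Prod.fst h)
    have h2 : (p.1 : Y) + L p.2 = y := congrArg Prod.snd h
    refine ⟨p.2, h1, ?_⟩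
    have hPro : Pr (p.1 : Y) = (p.1 : Y) := hPrid _ p.1.2
    have h3 : Pr (p.1 : Y) + Pr (L p.2) = 0 := by
      have := congrArg Pr h2
      rwa [map_add, hy] at this
    have ho : (p.1 : Y) = -Pr (L p.2) := by
      rw [← hPro]; exact eq_neg_of_add_eq_zero_left h3
    show L p.2 - Pr (L p.2) = y
    rw [← h2, ho]; abel
end

section
/- Let X, Y be Banach spaces and L : X → Y a bounded Fredholm operator. Let I ⊆ X be a finite-dimensional subspace containing ker L with bounded projection π, and O ⊆ Y a finite-dimensional subspace with Y = ran L + O and with bounded projection Π and inclusion ι. Assume the stabilized operator L̄ : O ⊕ X → I ⊕ Y, L̄(o,x) = (πx, ιo + Lx), is invertible. Then there is an exact sequence 0 → ker L → I → O → coker L → 0, where the map I → O is x₀ ↦ Π L x(x₀) with x(x₀) the unique element of x₀ + ker π satisfying (id − Π)Lx(x₀) = 0; consequently dim I − dim O = ind L. -/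
/-- The finite-dimensional obstruction map of a Kuranishi model: if the stabilized
    operator L̄(o,x) = (πx, ιo + Lx) is invertible, ker L ⊆ I and Y = ran L + O, then
    there is an obstruction map ob : I → O, ob(x₀) = ΠLx(x₀) with x(x₀) the unique
    element of x₀ + ker π with (id−Π)Lx(x₀) = 0, fitting into an exact sequence
    0 → ker L → I → O → coker L → 0; consequently dim I − dim O = ind L. -/
theorem kuranishi_obstruction_exact_sequence
    (X Y : Type*)
    [NormedAddCommGroup X] [NormedSpace ℝ X] [CompleteSpace X]
    [NormedAddCommGroup Y] [NormedSpace ℝ Y] [CompleteSpace Y]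
    (L : X →L[ℝ] Y)
    (I : Submodule ℝ X) [FiniteDimensional ℝ I]
    (π : X →L[ℝ] X) (hπI : ∀ x : X, π x ∈ I) (hπid : ∀ x ∈ I, π x = x)
    (O : Submodule ℝ Y) [FiniteDimensional ℝ O]
    (Pr : Y →L[ℝ] Y) (hPrO : ∀ y : Y, Pr y ∈ O) (hPrid : ∀ y ∈ O, Pr y = y)
    -- ker L ⊆ I
    (hker : ∀ x : X, L x = 0 → x ∈ I)
    -- Y = ran L + O
    (hran : ∀ y : Y, ∃ x : X, ∃ o ∈ O, y = L x + o)
    -- invertibility of the stabilized operator L̄(o, x) = (πx, ιo + Lx)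
    (hinv : ∃ R : ↥I × Y → ↥O × X, Continuous R ∧
      (∀ p : ↥O × X, R ((⟨π p.2, hπI p.2⟩ : ↥I), (p.1 : Y) + L p.2) = p) ∧
      (∀ q : ↥I × Y,
        ((⟨π (R q).2, hπI (R q).2⟩ : ↥I), ((R q).1 : Y) + L (R q).2) = q)) :
    -- for each x₀ ∈ I there is a unique x ∈ x₀ + ker π with (id − Π)Lx = 0
    (∀ x₀ ∈ I, ∃! x : X, π (x - x₀) = 0 ∧ L x - Pr (L x) = 0) ∧
    -- the obstruction map ob : I → O, ob(x₀) := Π L x(x₀)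
    (∃ ob : X → Y,
      (∀ x₀ ∈ I, ∀ x : X, π (x - x₀) = 0 → L x - Pr (L x) = 0 → ob x₀ = Pr (L x)) ∧
      (∀ x₀ ∈ I, ob x₀ ∈ O) ∧
      -- exactness at I: the kernel of ob is the image of ker L ⊆ I
      (∀ x₀ ∈ I, (ob x₀ = 0 ↔ L x₀ = 0)) ∧
      -- exactness at O: the image of ob is O ∩ ran L, the kernel of O → coker L
      (∀ y : Y, ((y ∈ O ∧ ∃ x : X, L x = y) ↔ ∃ x₀ ∈ I, ob x₀ = y)) ∧
      -- surjectivity of O → coker L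
      (∀ y : Y, ∃ o ∈ O, ∃ x : X, y - o = L x) ∧
      -- consequently dim I − dim O equals the index of L
      ((Module.finrank ℝ I : ℤ) - (Module.finrank ℝ O : ℤ) =
        (Module.finrank ℝ (LinearMap.ker (L : X →ₗ[ℝ] Y)) : ℤ) -
          (Module.finrank ℝ (Y ⧸ LinearMap.range (L : X →ₗ[ℝ] Y)) : ℤ))) := by
  classical
  obtain ⟨R, -, hRE, hER⟩ := hinv
  -- The stabilized operator as a linear map
  set E : (↥O × X) →ₗ[ℝ] (↥I × Y) :=
    { toFun := fun p => ((⟨π p.2, hπI p.2⟩ : ↥I), (p.1 : Y) + L p.2)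
      map_add' := by
        intro p q
        refine Prod.ext (Subtype.ext ?_) ?_ <;> simp <;> abel
      map_smul' := by
        intro c p
        refine Prod.ext (Subtype.ext ?_) ?_ <;> simp } with hEdef
  have hbij : Function.Bijective E := by
    constructor
    · intro p q h
      have h1 : R (E p) = p := hRE p
      have h2 : R (E q) = q := hRE q
      rw [h, h2] at h1
      exact h1.symm
    · intro q
      exact ⟨R q, hER q⟩
  set e : (↥O × X) ≃ₗ[ℝ] (↥I × Y) := LinearEquiv.ofBijective E hbij with hedef
  have heapp : ∀ p : ↥O × X, e p = ((⟨π p.2, hπI p.2⟩ : ↥I), (p.1 : Y) + L p.2) :=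
    fun p => rfl
  -- key injectivity fact
  have key : ∀ x : X, π x = 0 → L x ∈ O → x = 0 := by
    intro x hx hLx
    have h0 : E ((⟨-L x, neg_mem hLx⟩ : ↥O), x) = 0 := by
      refine Prod.ext (Subtype.ext ?_) ?_ <;> simp [hEdef, hx]
    have h2 : ((⟨-L x, neg_mem hLx⟩ : ↥O), x) = (0 : ↥O × X) :=
      hbij.1 (by rw [h0, map_zero])
    exact congrArg Prod.snd h2
  -- the solution map
  set s : X → X := fun x₀ => (e.symm ((⟨π x₀, hπI x₀⟩ : ↥I), (0 : Y))).2 with hsdef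
  have hs1 : ∀ x₀ : X, π (s x₀) = π x₀ := by
    intro x₀
    have h := e.apply_symm_apply ((⟨π x₀, hπI x₀⟩ : ↥I), (0 : Y))
    rw [heapp] at h
    exact congrArg (fun q : ↥I × Y => (q.1 : X)) h
  have hs2 : ∀ x₀ : X, L (s x₀) ∈ O := by
    intro x₀
    have h := congrArg Prod.snd (e.apply_symm_apply ((⟨π x₀, hπI x₀⟩ : ↥I), (0 : Y)))
    rw [heapp] at h
    have h' : L (s x₀) = -((e.symm ((⟨π x₀, hπI x₀⟩ : ↥I), (0 : Y))).1 : Y) :=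
      eq_neg_of_add_eq_zero_right h
    rw [h']
    exact neg_mem (SetLike.coe_mem _)
  have hs2' : ∀ x₀ : X, Pr (L (s x₀)) = L (s x₀) := fun x₀ => hPrid _ (hs2 x₀)
  -- uniqueness
  have huniq : ∀ x₀ x : X, π (x - x₀) = 0 → L x - Pr (L x) = 0 → x = s x₀ := by
    intro x₀ x h1 h2
    have hLxO : L x ∈ O := by
      have h2' : L x = Pr (L x) := sub_eq_zero.mp h2
      rw [h2']; exact hPrO _
    have hxx : π x = π x₀ := by rw [map_sub, sub_eq_zero] at h1; exact h1
    have hπd : π (x - s x₀) = 0 := by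
      rw [map_sub, hs1 x₀, hxx, sub_self]
    have hLd : L (x - s x₀) ∈ O := by
      rw [map_sub]
      exact sub_mem hLxO (hs2 x₀)
    have := key _ hπd hLd
    have := sub_eq_zero.mp this
    exact this
  have hsat : ∀ x₀ : X, π (s x₀ - x₀) = 0 ∧ L (s x₀) - Pr (L (s x₀)) = 0 := by
    intro x₀
    constructor
    · rw [map_sub, hs1 x₀, sub_self]
    · rw [hs2' x₀, sub_self]
  refine ⟨?_, ?_⟩
  · intro x₀ _
    exact ⟨s x₀, hsat x₀, fun x ⟨h1, h2⟩ => huniq x₀ x h1 h2⟩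
  · refine ⟨fun x₀ => Pr (L (s x₀)), ?_, ?_, ?_, ?_, ?_, ?_⟩
    · intro x₀ _ x h1 h2
      rw [huniq x₀ x h1 h2]
    · intro x₀ _; exact hPrO _
    · -- exactness at I
      intro x₀ hx₀
      show Pr (L (s x₀)) = 0 ↔ L x₀ = 0
      constructor
      · intro h
        have hL0 : L (s x₀) = 0 := by rw [← hs2' x₀, h]
        have hmem : s x₀ ∈ I := hker _ hL0
        have : s x₀ = x₀ := by
          have h1 := hπid _ hmem
          have h2 := hπid _ hx₀
          rw [← h1, hs1 x₀, h2]
        rw [← this]; exact hL0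
      · intro h
        have : x₀ = s x₀ :=
          huniq x₀ x₀ (by rw [sub_self, map_zero]) (by rw [h, map_zero, sub_zero])
        rw [← this, h, map_zero]
    · -- exactness at O
      intro y
      constructor
      · rintro ⟨hyO, x, hx⟩
        refine ⟨π x, hπI x, ?_⟩
        show Pr (L (s (π x))) = y
        have hx' : x = s (π x) := by
          refine huniq (π x) x ?_ ?_
          · rw [map_sub, hπid _ (hπI x), sub_self]
          · rw [hx, hPrid _ hyO, sub_self]
        rw [← hx', hx, hPrid _ hyO]
      · rintro ⟨x₀, _, rfl⟩
        exact ⟨hPrO _, s x₀, (hs2' x₀).symm⟩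
    · -- surjectivity onto coker
      intro y
      obtain ⟨x, o, hoO, hy⟩ := hran y
      exact ⟨o, hoO, x, by rw [hy]; abel⟩
    · -- index formula
      -- linear version of the obstruction map
      set j : X →ₗ[ℝ] ↥I × Y :=
        LinearMap.prod (LinearMap.codRestrict I (π : X →ₗ[ℝ] X) hπI) 0 with hjdef
      have hjapp : ∀ x : X, j x = ((⟨π x, hπI x⟩ : ↥I), (0 : Y)) := fun x => rfl
      set g : ↥I →ₗ[ℝ] ↥O :=
        LinearMap.codRestrict O
          ((((Pr : Y →ₗ[ℝ] Y).comp (L : X →ₗ[ℝ] Y)).comp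
            ((LinearMap.snd ℝ ↥O X).comp
              ((e.symm : ↥I × Y →ₗ[ℝ] ↥O × X).comp (j.comp I.subtype)))))
          (fun x => hPrO _) with hgdef
      have hgapp : ∀ x : ↥I, (g x : Y) = Pr (L (s (x : X))) := fun x => rfl
      -- the quotient map restricted to O
      set f : ↥O →ₗ[ℝ] Y ⧸ LinearMap.range (L : X →ₗ[ℝ] Y) :=
        (LinearMap.range (L : X →ₗ[ℝ] Y)).mkQ.comp O.subtype with hfdef
      have hfsurj : Function.Surjective f := by
        intro q
        obtain ⟨y, rfl⟩ := Submodule.Quotient.mk_surjective _ q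
        obtain ⟨x, o, hoO, hy⟩ := hran y
        refine ⟨⟨o, hoO⟩, ?_⟩
        have : (f ⟨o, hoO⟩ : Y ⧸ LinearMap.range (L : X →ₗ[ℝ] Y)) =
            Submodule.Quotient.mk o := rfl
        rw [this, Submodule.Quotient.eq]
        exact ⟨-x, by rw [hy]; simp⟩
      have hfin : Module.Finite ℝ (Y ⧸ LinearMap.range (L : X →ₗ[ℝ] Y)) :=
        Module.Finite.of_surjective f hfsurj
      -- kernel of g is ker L (pulled back to I)
      have hkerg : LinearMap.ker g =
          (LinearMap.ker (L : X →ₗ[ℝ] Y)).comap I.subtype := by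
        ext x
        simp only [LinearMap.mem_ker, Submodule.mem_comap, Submodule.coe_subtype,
          ContinuousLinearMap.coe_coe]
        rw [Subtype.ext_iff]
        change (Pr (L (s (x : X))) = 0) ↔ _
        constructor
        · intro h
          have hL0 : L (s (x : X)) = 0 := by rw [← hs2' (x : X), h]
          have hmem : s (x : X) ∈ I := hker _ hL0
          have heq : s (x : X) = (x : X) := by
            rw [← hπid _ hmem, hs1 (x : X), hπid _ x.2]
          rw [← heq]; exact hL0
        · intro h
          have : (x : X) = s (x : X) :=
            huniq _ _ (by rw [sub_self, map_zero]) (by rw [h, map_zero, sub_zero])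
          rw [← this, h, map_zero]
      have hrangeg : LinearMap.range g = LinearMap.ker f := by
        ext o
        simp only [LinearMap.mem_range, LinearMap.mem_ker]
        have hfo : f o = Submodule.Quotient.mk (o : Y) := rfl
        rw [hfo, Submodule.Quotient.mk_eq_zero]
        constructor
        · rintro ⟨x, rfl⟩
          rw [hgapp, hs2']
          exact ⟨s (x : X), rfl⟩
        · rintro ⟨x, hx⟩
          have hx2 : L x = (o : Y) := hx
          refine ⟨⟨π x, hπI x⟩, ?_⟩
          apply Subtype.ext
          rw [hgapp]
          have hx' : x = s (π x) := by
            refine huniq (π x) x ?_ ?_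
            · rw [map_sub, hπid _ (hπI x), sub_self]
            · rw [hx2, hPrid _ o.2, sub_self]
          rw [← hx', hx2, hPrid _ o.2]
      -- rank-nullity for g and f
      have hI : Module.finrank ℝ I =
          Module.finrank ℝ (LinearMap.ker (L : X →ₗ[ℝ] Y)) +
            Module.finrank ℝ (LinearMap.range g) := by
        have h1 := LinearMap.finrank_range_add_finrank_ker g
        have h2 : Module.finrank ℝ (LinearMap.ker g) =
            Module.finrank ℝ (LinearMap.ker (L : X →ₗ[ℝ] Y)) := by
          rw [hkerg]
          exact LinearEquiv.finrank_eq
            (Submodule.comapSubtypeEquivOfLe (fun x hx => hker x hx))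
        omega
      have hO : Module.finrank ℝ O =
          Module.finrank ℝ (Y ⧸ LinearMap.range (L : X →ₗ[ℝ] Y)) +
            Module.finrank ℝ (LinearMap.range g) := by
        have h1 := LinearMap.finrank_range_add_finrank_ker f
        have h2 : Module.finrank ℝ (LinearMap.range f) =
            Module.finrank ℝ (Y ⧸ LinearMap.range (L : X →ₗ[ℝ] Y)) := by
          rw [LinearMap.range_eq_top.mpr hfsurj]
          exact finrank_top ℝ _
        rw [← hrangeg] at h1
        omega
      rw [hI, hO]
      push_cast
      ring
end
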